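/- Let d ≥ 1 and m > d be integers, let Γ ⊂ ℝ^m be a compact smooth d-dimensional embedded submanifold of ℝ^m, let μ be the d-dimensional Hausdorff measure restricted to Γ, and let f ∈ L²(Γ, μ). Then for every δ > 0 there exists a depth-4 ReLU network f_N : ℝ^m → ℝ such that ∫_Γ |f(x) − f_N(x)|² dμ(x) ≤ δ. -/

import Mathlib

/-!
Since `Γ` is the image of a compact manifold under a `C¹` map, it is covered by finitely many
Lipschitz images of Euclidean balls, so `μ` is finite; the approximation itself works for every
finite Borel measure `ν` on `ℝ^m`. Continuous compactly supported functions are dense in `L²(ν)`,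
and such a `g` is approximated on a grid of cubes by `∑ₚ g(cornerₚ) · bumpₚ`, where
`bumpₚ = rect(∑ᵢ plateauᵢ - (m - 1))` is a soft indicator of the cube `p` and each trapezoid
`plateauᵢ` is a combination of rectifiers of one coordinate, so that the sum is a depth-4 network.
The grid offset is chosen so that all grid hyperplanes are `ν`-null (only countably many offsets
fail); off these hyperplanes the bumps become exact indicators as their slopes grow, and dominated
convergence gives the `L²` bound.
-/

open MeasureTheory Manifold

/-- A depth-4 network with ReLU activations: `f_N = A₄ ∘ σ ∘ A₃ ∘ σ ∘ A₂ ∘ A₁` where the `Aᵢ`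
are affine maps and `σ` is the coordinatewise rectifier `rect(x) = max{0,x}`. -/
def IsDepth4ReLUNet {m : ℕ} (F : EuclideanSpace ℝ (Fin m) → ℝ) : Prop :=
  ∃ (n1 n2 n3 : ℕ) (W1 : Matrix (Fin n1) (Fin m) ℝ) (c1 : Fin n1 → ℝ)
    (W2 : Matrix (Fin n2) (Fin n1) ℝ) (c2 : Fin n2 → ℝ)
    (W3 : Matrix (Fin n3) (Fin n2) ℝ) (c3 : Fin n3 → ℝ)
    (w : Fin n3 → ℝ) (c4 : ℝ),
    ∀ x : EuclideanSpace ℝ (Fin m),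
      F x = (∑ i : Fin n3,
          w i * max 0 ((W3.mulVec (fun j : Fin n2 =>
            max 0 ((W2.mulVec (W1.mulVec x + c1) + c2) j)) + c3) i)) + c4

open Filter Topology

theorem IsDepth4ReLUNet.continuous {m : ℕ} {F : EuclideanSpace ℝ (Fin m) → ℝ}
    (hF : IsDepth4ReLUNet F) : Continuous F := by
  obtain ⟨_, _, _, W1, c1, W2, c2, W3, c3, w, c4, hF⟩ := hF
  rw [funext hF]
  fun_prop

def ramp (t : ℝ) : ℝ := max 0 t - max 0 (t - 1)

theorem ramp_le_one (t : ℝ) : ramp t ≤ 1 := by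
  rw [ramp, sub_le_iff_le_add]
  exact max_le (by linarith [le_max_left 0 (t - 1)]) (by linarith [le_max_right 0 (t - 1)])

theorem ramp_of_nonpos {t : ℝ} (h : t ≤ 0) : ramp t = 0 := by
  simp [ramp, h, (by linarith : t - 1 ≤ 0)]

theorem ramp_of_one_le {t : ℝ} (h : 1 ≤ t) : ramp t = 1 := by
  simp [ramp, (by linarith : (0:ℝ) ≤ t), (by linarith : (0:ℝ) ≤ t - 1)]

def plateau (s a h y : ℝ) : ℝ := ramp (s * (y - a)) + ramp (s * (a + h - y)) - 1

theorem plateau_le_one (s a h y : ℝ) : plateau s a h y ≤ 1 := by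
  have := ramp_le_one (s * (y - a)); have := ramp_le_one (s * (a + h - y))
  unfold plateau; linarith

theorem plateau_eq_one {s a h y : ℝ} (h₁ : 1 ≤ s * (y - a)) (h₂ : 1 ≤ s * (a + h - y)) :
    plateau s a h y = 1 := by
  simp [plateau, ramp_of_one_le h₁, ramp_of_one_le h₂]

theorem plateau_nonpos {s a h y : ℝ} (hs : 0 ≤ s) (hy : y ≤ a ∨ a + h ≤ y) :
    plateau s a h y ≤ 0 := by
  unfold plateau
  rcases hy with hy | hy
  · rw [ramp_of_nonpos (mul_nonpos_of_nonneg_of_nonpos hs (by linarith))]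
    linarith [ramp_le_one (s * (a + h - y))]
  · rw [ramp_of_nonpos (t := s * (a + h - y)) (mul_nonpos_of_nonneg_of_nonpos hs (by linarith))]
    linarith [ramp_le_one (s * (y - a))]

namespace ReLUNet

variable {m : ℕ}

def neuron (p : (Fin m → ℝ) × ℝ) (x : EuclideanSpace ℝ (Fin m)) : ℝ :=
  max 0 (p.1 ⬝ᵥ x.ofLp + p.2)

variable (m) in
def shallow : Submodule ℝ (EuclideanSpace ℝ (Fin m) → ℝ) :=
  Submodule.span ℝ (Set.range neuron)

theorem isDepth4ReLUNet_of_fintype {ι κ : Type*} [Fintype ι] [Fintype κ]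
    (A : ι → Fin m → ℝ) (b : ι → ℝ) (V : κ → ι → ℝ) (w : κ → ℝ) :
    IsDepth4ReLUNet fun x =>
      ∑ k, w k * max 0 (∑ i, V k i * max 0 (A i ⬝ᵥ x.ofLp + b i)) := by
  set eι := (Fintype.equivFin ι).symm
  set eκ := (Fintype.equivFin κ).symm
  refine ⟨_, _, _, Matrix.of fun j => A (eι j), fun j => b (eι j), 1, 0,
    Matrix.of fun q j => V (eκ q) (eι j), 0, fun q => w (eκ q), 0, fun x => ?_⟩
  simp only [Matrix.one_mulVec, add_zero, Pi.add_apply, Matrix.mulVec, dotProduct,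
    Matrix.of_apply]
  rw [← eκ.sum_comp]
  refine Finset.sum_congr rfl fun q _ => ?_
  rw [← eι.sum_comp]
  simp only [Pi.zero_apply, add_zero]

theorem isDepth4ReLUNet_sum_relu {κ : Type*} (S : Finset κ)
    (φ : κ → EuclideanSpace ℝ (Fin m) → ℝ) (hφ : ∀ k ∈ S, φ k ∈ shallow m) (w : κ → ℝ) :
    IsDepth4ReLUNet fun x => ∑ k ∈ S, w k * max 0 (φ k x) := by
  classical
  choose! l hl using fun k hk => Finsupp.mem_span_range_iff_exists_finsupp.1 (hφ k hk)
  set T := S.biUnion fun k => (l k).support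
  have hT : ∀ k ∈ S, ∀ x, φ k x = ∑ t : T, l k t * neuron t.1 x := by
    intro k hk x
    rw [← hl k hk, Finsupp.sum_of_support_subset (l k)
      (Finset.subset_biUnion_of_mem (fun k => (l k).support) hk) (fun t a => a • neuron t)
        (fun _ _ => zero_smul ℝ _),
      Finset.sum_apply, ← Finset.sum_coe_sort T]
    simp only [Pi.smul_apply, smul_eq_mul]
  convert isDepth4ReLUNet_of_fintype (fun t : T => t.1.1) (fun t => t.1.2)
    (fun (k : S) t => l k t) (fun k => w k) using 2 with x
  rw [← Finset.sum_coe_sort S]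
  refine Finset.sum_congr rfl fun k _ => ?_
  rw [hT k k.2 x]
  rfl

theorem const_mem_shallow (c : ℝ) : (fun _ => c) ∈ shallow m := by
  have : (fun _ => c) = c • neuron ((0 : Fin m → ℝ), 1) := by
    ext x; simp [neuron]
  rw [this]
  exact Submodule.smul_mem _ _ (Submodule.subset_span ⟨_, rfl⟩)

theorem relu_coord_mem_shallow (i : Fin m) (a b : ℝ) :
    (fun x : EuclideanSpace ℝ (Fin m) => max 0 (a * x i + b)) ∈ shallow m := by
  have : (fun x : EuclideanSpace ℝ (Fin m) => max 0 (a * x i + b)) =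
      neuron (Pi.single i a, b) := by
    ext x; simp [neuron, single_dotProduct]
  rw [this]
  exact Submodule.subset_span ⟨_, rfl⟩

theorem ramp_coord_mem_shallow (i : Fin m) (a b : ℝ) :
    (fun x : EuclideanSpace ℝ (Fin m) => ramp (a * x i + b)) ∈ shallow m := by
  have := Submodule.sub_mem _ (relu_coord_mem_shallow i a b) (relu_coord_mem_shallow i a (b - 1))
  convert this using 2 with x
  simp [ramp, add_sub_assoc]

end ReLUNet

section CubeBump

variable {m : ℕ}

def cubeBumpPre (s h : ℝ) (a x : EuclideanSpace ℝ (Fin m)) : ℝ :=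
  ∑ i, plateau s (a i) h (x i) - (m - 1)

theorem cubeBumpPre_mem_shallow (s h : ℝ) (a : EuclideanSpace ℝ (Fin m)) :
    cubeBumpPre s h a ∈ ReLUNet.shallow m := by
  have hplateau : ∀ i, (fun x : EuclideanSpace ℝ (Fin m) => plateau s (a i) h (x i)) ∈
      ReLUNet.shallow m := by
    intro i
    have := Submodule.sub_mem _ (Submodule.add_mem _
      (ReLUNet.ramp_coord_mem_shallow i s (-(s * a i)))
      (ReLUNet.ramp_coord_mem_shallow i (-s) (s * (a i + h)))) (ReLUNet.const_mem_shallow 1)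
    convert this using 2 with x
    simp only [plateau, Pi.add_apply, Pi.sub_apply]
    ring_nf
  have := Submodule.sub_mem _ (Submodule.sum_mem _ (t := Finset.univ) fun i _ => hplateau i)
    (ReLUNet.const_mem_shallow ((m : ℝ) - 1))
  convert this using 1
  ext x
  simp [cubeBumpPre]

theorem cubeBumpPre_le_one (s h : ℝ) (a x : EuclideanSpace ℝ (Fin m)) :
    cubeBumpPre s h a x ≤ 1 := by
  have : ∑ i, plateau s (a i) h (x i) ≤ ∑ _i : Fin m, 1 :=
    Finset.sum_le_sum fun i _ => plateau_le_one _ _ _ _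
  simp only [Finset.sum_const, Finset.card_univ, Fintype.card_fin, nsmul_eq_mul, mul_one] at this
  unfold cubeBumpPre; linarith

theorem cubeBumpPre_eq_one {s h : ℝ} {a x : EuclideanSpace ℝ (Fin m)}
    (hx : ∀ i, 1 ≤ s * (x i - a i) ∧ 1 ≤ s * (a i + h - x i)) : cubeBumpPre s h a x = 1 := by
  simp [cubeBumpPre, fun i => plateau_eq_one (hx i).1 (hx i).2]

theorem cubeBumpPre_nonpos {s h : ℝ} (hs : 0 ≤ s) {a x : EuclideanSpace ℝ (Fin m)} (i : Fin m)
    (hi : x i ≤ a i ∨ a i + h ≤ x i) : cubeBumpPre s h a x ≤ 0 := by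
  have hgap : 1 - plateau s (a i) h (x i) ≤ ∑ j, (1 - plateau s (a j) h (x j)) :=
    Finset.single_le_sum (f := fun j => 1 - plateau s (a j) h (x j))
      (fun j _ => sub_nonneg.2 (plateau_le_one _ _ _ _)) (Finset.mem_univ i)
  have := plateau_nonpos hs hi
  simp only [Finset.sum_sub_distrib, Finset.sum_const, Finset.card_univ, Fintype.card_fin,
    nsmul_eq_mul, mul_one] at hgap
  unfold cubeBumpPre; linarith

end CubeBump

theorem EuclideanSpace.norm_le_sqrt_card_mul {ι : Type*} [Fintype ι] {r : ℝ} (hr : 0 ≤ r)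
    {v : EuclideanSpace ℝ ι} (hv : ∀ i, |v i| ≤ r) : ‖v‖ ≤ √(Fintype.card ι) * r := by
  rw [EuclideanSpace.norm_eq]
  calc √(∑ i, ‖v i‖ ^ 2) ≤ √(∑ _i : ι, r ^ 2) :=
        Real.sqrt_le_sqrt (Finset.sum_le_sum fun i _ => pow_le_pow_left₀ (norm_nonneg _) (hv i) 2)
    _ = √(Fintype.card ι) * r := by simp [Real.sqrt_mul, Real.sqrt_sq hr]

section Grid

variable {m : ℕ} {o h : ℝ}

noncomputable def gridCell (o h : ℝ) (x : EuclideanSpace ℝ (Fin m)) : Fin m → ℤ :=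
  fun i => ⌊(x i - o) / h⌋

def gridCorner (o h : ℝ) (p : Fin m → ℤ) : EuclideanSpace ℝ (Fin m) :=
  WithLp.toLp 2 fun i => o + p i * h

@[simp] theorem gridCorner_apply (p : Fin m → ℤ) (i : Fin m) :
    gridCorner o h p i = o + p i * h := rfl

theorem le_of_le_gridCell (hh : 0 < h) {x : EuclideanSpace ℝ (Fin m)} {i : Fin m} {k : ℤ}
    (hk : k ≤ gridCell o h x i) : o + k * h ≤ x i := by
  have := Int.le_floor.1 hk
  rw [le_div_iff₀ hh] at this
  linarith

theorem lt_of_gridCell_lt (hh : 0 < h) {x : EuclideanSpace ℝ (Fin m)} {i : Fin m} {k : ℤ}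
    (hk : gridCell o h x i < k) : x i < o + k * h := by
  have := Int.floor_lt.1 hk
  rw [div_lt_iff₀ hh] at this
  linarith

theorem gridCorner_gridCell_le (hh : 0 < h) (x : EuclideanSpace ℝ (Fin m)) (i : Fin m) :
    gridCorner o h (gridCell o h x) i ≤ x i :=
  le_of_le_gridCell hh le_rfl

theorem lt_gridCorner_gridCell_add (hh : 0 < h) (x : EuclideanSpace ℝ (Fin m)) (i : Fin m) :
    x i < gridCorner o h (gridCell o h x) i + h := by
  have := lt_of_gridCell_lt (o := o) hh (Int.lt_add_one_iff.2 (le_refl (gridCell o h x i)))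
  push_cast at this
  simp only [gridCorner_apply]; linarith

theorem cubeBumpPre_gridCorner_nonpos {s : ℝ} (hs : 0 ≤ s) (hh : 0 < h)
    {x : EuclideanSpace ℝ (Fin m)} {p : Fin m → ℤ} (hp : p ≠ gridCell o h x) :
    cubeBumpPre s h (gridCorner o h p) x ≤ 0 := by
  obtain ⟨i, hi⟩ := Function.ne_iff.1 hp
  refine cubeBumpPre_nonpos hs i ?_
  rcases hi.lt_or_gt with hi | hi
  · have := le_of_le_gridCell hh (Int.add_one_le_of_lt hi)
    push_cast at this
    exact Or.inr (by simp only [gridCorner_apply]; linarith)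
  · exact Or.inl (lt_of_gridCell_lt hh hi).le

theorem dist_gridCorner_gridCell_le (hh : 0 < h) (x : EuclideanSpace ℝ (Fin m)) :
    dist x (gridCorner o h (gridCell o h x)) ≤ √m * h := by
  rw [dist_eq_norm]
  refine (EuclideanSpace.norm_le_sqrt_card_mul hh.le fun i => ?_).trans_eq
    (by rw [Fintype.card_fin])
  have hlo := gridCorner_gridCell_le (o := o) hh x i
  have hhi := lt_gridCorner_gridCell_add (o := o) hh x i
  rw [WithLp.ofLp_sub, Pi.sub_apply, abs_le]
  constructor <;> linarith

noncomputable def gridBox (o h R : ℝ) : Finset (Fin m → ℤ) :=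
  Fintype.piFinset fun _ => Finset.Icc (-⌈(R + |o|) / h⌉) ⌈(R + |o|) / h⌉

theorem gridCell_mem_gridBox (hh : 0 < h) {R : ℝ} {x : EuclideanSpace ℝ (Fin m)} (hx : ‖x‖ ≤ R) :
    gridCell o h x ∈ gridBox o h R := by
  refine Fintype.mem_piFinset.2 fun i => Finset.mem_Icc.2 ?_
  have hxi : |x i| ≤ R := (Real.norm_eq_abs _ ▸ PiLp.norm_apply_le x i).trans hx
  have ht : |(x i - o) / h| ≤ (R + |o|) / h := by
    rw [abs_div, abs_of_pos hh]
    exact div_le_div_of_nonneg_right ((abs_sub _ _).trans (by linarith)) hh.le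
  constructor
  · rw [← Int.floor_neg]; exact Int.floor_mono (abs_le.1 ht).1
  · exact (Int.floor_mono (abs_le.1 ht).2).trans (Int.floor_le_ceil _)

noncomputable def gridNet (g : EuclideanSpace ℝ (Fin m) → ℝ) (o h s : ℝ)
    (S : Finset (Fin m → ℤ)) (x : EuclideanSpace ℝ (Fin m)) : ℝ :=
  ∑ p ∈ S, g (gridCorner o h p) * max 0 (cubeBumpPre s h (gridCorner o h p) x)

variable {g : EuclideanSpace ℝ (Fin m) → ℝ} {s : ℝ} {S : Finset (Fin m → ℤ)}

theorem isDepth4ReLUNet_gridNet : IsDepth4ReLUNet (gridNet g o h s S) :=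
  ReLUNet.isDepth4ReLUNet_sum_relu S _ (fun _ _ => cubeBumpPre_mem_shallow s h _) _

theorem gridNet_eq (hs : 0 ≤ s) (hh : 0 < h) (x : EuclideanSpace ℝ (Fin m)) :
    gridNet g o h s S x = if gridCell o h x ∈ S then g (gridCorner o h (gridCell o h x)) *
      max 0 (cubeBumpPre s h (gridCorner o h (gridCell o h x)) x) else 0 := by
  have hvanish : ∀ p ≠ gridCell o h x,
      g (gridCorner o h p) * max 0 (cubeBumpPre s h (gridCorner o h p) x) = 0 := fun p hp => by
    rw [max_eq_left (cubeBumpPre_gridCorner_nonpos hs hh hp), mul_zero]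
  split_ifs with hx
  · exact Finset.sum_eq_single_of_mem _ hx fun p _ hp => hvanish p hp
  · exact Finset.sum_eq_zero fun p hp => hvanish p (ne_of_mem_of_not_mem hp hx)

theorem abs_gridNet_le (hs : 0 ≤ s) (hh : 0 < h) {W : ℝ} (hW : ∀ y, |g y| ≤ W)
    (x : EuclideanSpace ℝ (Fin m)) : |gridNet g o h s S x| ≤ W := by
  rw [gridNet_eq hs hh]
  split_ifs
  · rw [abs_mul, abs_of_nonneg (le_max_left (0 : ℝ) _)]
    exact (mul_le_of_le_one_right (abs_nonneg _)
      (max_le zero_le_one (cubeBumpPre_le_one _ _ _ _))).trans (hW _)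
  · exact abs_zero.trans_le ((abs_nonneg _).trans (hW x))

theorem abs_sub_ite_gridCell_le (hh : 0 < h) {R ε : ℝ} (hε : 0 ≤ ε)
    (hR : ∀ x, g x ≠ 0 → ‖x‖ ≤ R) (hgh : ∀ x y, dist x y ≤ √m * h → |g x - g y| ≤ ε)
    (x : EuclideanSpace ℝ (Fin m)) :
    |g x - if gridCell o h x ∈ gridBox o h R then g (gridCorner o h (gridCell o h x)) else 0|
      ≤ ε := by
  split_ifs with hx
  · exact hgh _ _ (dist_gridCorner_gridCell_le hh x)
  · have : g x = 0 := by
      by_contra hne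
      exact hx (gridCell_mem_gridBox hh (hR x hne))
    rw [this, sub_zero, abs_zero]
    exact hε

theorem eventually_gridNet_eq (hh : 0 < h) {x : EuclideanSpace ℝ (Fin m)}
    (hx : ∀ i (k : ℤ), x i ≠ o + k * h) :
    ∀ᶠ n : ℕ in atTop, gridNet g o h n S x =
      if gridCell o h x ∈ S then g (gridCorner o h (gridCell o h x)) else 0 := by
  set c := gridCorner o h (gridCell o h x)
  have hlo : ∀ i, 0 < x i - c i := fun i =>
    sub_pos.2 ((gridCorner_gridCell_le hh x i).lt_of_ne (hx i _).symm)
  have hhi : ∀ i, 0 < c i + h - x i := fun i =>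
    sub_pos.2 (lt_gridCorner_gridCell_add hh x i)
  have hsharp : ∀ᶠ n : ℕ in atTop, ∀ i, 1 ≤ n * (x i - c i) ∧ 1 ≤ n * (c i + h - x i) :=
    eventually_all.2 fun i =>
      ((tendsto_natCast_atTop_atTop.atTop_mul_const (hlo i)).eventually_ge_atTop 1).and
        ((tendsto_natCast_atTop_atTop.atTop_mul_const (hhi i)).eventually_ge_atTop 1)
  filter_upwards [hsharp] with n hn
  rw [gridNet_eq n.cast_nonneg hh, cubeBumpPre_eq_one hn, max_eq_right zero_le_one, mul_one]

end Grid

theorem exists_forall_measure_preimage_singleton_eq_zero {X ι : Type*} [MeasurableSpace X]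
    [Countable ι] (ν : Measure X) [IsFiniteMeasure ν] (φ : ι → X → ℝ)
    (hφ : ∀ i, Measurable (φ i)) : ∃ o : ℝ, ∀ i, ν (φ i ⁻¹' {o}) = 0 := by
  have hatoms : ∀ i, {c : ℝ | 0 < ν (φ i ⁻¹' {c})}.Countable := fun i =>
    Measure.countable_meas_pos_of_disjoint_of_meas_iUnion_ne_top ν
      (fun c => hφ i (measurableSet_singleton c)) (pairwise_disjoint_fiber (φ i))
      (measure_ne_top ν _)
  obtain ⟨o, ho⟩ := ((Set.countable_iUnion hatoms).dense_compl ℝ).nonempty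
  refine ⟨o, fun i => ?_⟩
  simpa using fun h => ho (Set.mem_iUnion.2 ⟨i, h⟩)

theorem eventually_integral_sq_lt_of_ae_eventually_abs_le {X : Type*} [MeasurableSpace X]
    {ν : Measure X} [IsFiniteMeasure ν] {u : ℕ → X → ℝ} (hu : ∀ n, AEStronglyMeasurable (u n) ν)
    {C ε δ : ℝ} (hC : ∀ n x, |u n x| ≤ C) (hε : ∀ᵐ x ∂ν, ∀ᶠ n in atTop, |u n x| ≤ ε)
    (hδ : ν.real Set.univ * ε ^ 2 < δ) : ∀ᶠ n in atTop, ∫ x, u n x ^ 2 ∂ν < δ := by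
  set v : ℕ → X → ℝ := fun n x => max (u n x ^ 2) (ε ^ 2)
  have hv : ∀ n, AEStronglyMeasurable (v n) ν := fun n =>
    ((hu n).pow 2).sup aestronglyMeasurable_const
  have hvC : ∀ n, ∀ x, ‖v n x‖ ≤ max (C ^ 2) (ε ^ 2) := fun n x => by
    have := abs_le.1 (hC n x)
    rw [Real.norm_of_nonneg (le_max_of_le_right (sq_nonneg ε))]
    exact max_le_max_right _ (sq_le_sq' this.1 this.2)
  have hlim : Tendsto (fun n => ∫ x, v n x ∂ν) atTop (𝓝 (∫ _, ε ^ 2 ∂ν)) := by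
    refine tendsto_integral_of_dominated_convergence _ hv (integrable_const _)
      (fun n => ae_of_all _ (hvC n)) ?_
    filter_upwards [hε] with x hx
    refine tendsto_const_nhds.congr' (hx.mono fun n hn => ?_)
    exact (max_eq_right (sq_le_sq' (abs_le.1 hn).1 (abs_le.1 hn).2)).symm
  rw [integral_const, smul_eq_mul] at hlim
  filter_upwards [hlim.eventually (gt_mem_nhds hδ)] with n hn
  calc ∫ x, u n x ^ 2 ∂ν ≤ ∫ x, v n x ∂ν :=
        integral_mono_of_nonneg (ae_of_all _ fun x => sq_nonneg _)
          (Integrable.of_bound (hv n) _ (ae_of_all _ (hvC n)))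
          (ae_of_all _ fun x => le_max_left _ _)
    _ < δ := hn

theorem exists_isDepth4ReLUNet_integral_sq_sub_lt_of_hasCompactSupport {m : ℕ}
    {ν : Measure (EuclideanSpace ℝ (Fin m))} [IsFiniteMeasure ν]
    {g : EuclideanSpace ℝ (Fin m) → ℝ} (hg : Continuous g) (hgc : HasCompactSupport g)
    {δ : ℝ} (hδ : 0 < δ) :
    ∃ F, IsDepth4ReLUNet F ∧ MemLp F 2 ν ∧ ∫ x, (g x - F x) ^ 2 ∂ν < δ := by
  obtain ⟨W, hW⟩ := hg.bounded_above_of_compact_support hgc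
  simp only [Real.norm_eq_abs] at hW
  obtain ⟨ε, hε, hεδ⟩ : ∃ ε > 0, ν.real Set.univ * ε ^ 2 < δ := by
    have hT := measureReal_nonneg (μ := ν) (s := Set.univ)
    refine ⟨√(δ / (ν.real Set.univ + 1)), by positivity, ?_⟩
    rw [Real.sq_sqrt (by positivity), mul_div_assoc', div_lt_iff₀ (by positivity)]
    nlinarith
  obtain ⟨η, hη, hgη⟩ :=
    Metric.uniformContinuous_iff.1 (hgc.uniformContinuous_of_continuous hg) ε hε
  obtain ⟨R, hR⟩ := hgc.isCompact.isBounded.subset_closedBall 0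
  set h := η / (√m + 1)
  have hh : 0 < h := by positivity
  have hgh : ∀ x y, dist x y ≤ √m * h → |g x - g y| ≤ ε := fun x y hxy => by
    refine (Real.dist_eq _ _ ▸ hgη (hxy.trans_lt ?_)).le
    rw [← mul_div_assoc, div_lt_iff₀ (by positivity)]
    nlinarith [Real.sqrt_nonneg (m : ℝ)]
  obtain ⟨o, ho⟩ := exists_forall_measure_preimage_singleton_eq_zero ν
    (fun (ik : Fin m × ℤ) (x : EuclideanSpace ℝ (Fin m)) => x ik.1 - ik.2 * h)
    (fun _ => by fun_prop)
  set S := gridBox o h R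
  have hclose := abs_sub_ite_gridCell_le (o := o) hh hε.le
    (fun x hx => mem_closedBall_zero_iff.1 (hR (subset_tsupport _ hx))) hgh
  have hgrid : ∀ᵐ x ∂ν, ∀ i (k : ℤ), x i ≠ o + k * h :=
    ae_all_iff.2 fun i => ae_all_iff.2 fun k =>
      (measure_eq_zero_iff_ae_notMem.1 (ho (i, k))).mono fun x hx heq => hx (by simp [heq])
  obtain ⟨n, hn⟩ := (eventually_integral_sq_lt_of_ae_eventually_abs_le
    (u := fun n x => g x - gridNet g o h n S x)
    (fun n => (hg.sub isDepth4ReLUNet_gridNet.continuous).aestronglyMeasurable) (C := W + W)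
    (fun n x => (abs_sub _ _).trans (add_le_add (hW x) (abs_gridNet_le n.cast_nonneg hh hW x)))
    (hgrid.mono fun x hx => (eventually_gridNet_eq hh hx).mono fun n hn => hn ▸ hclose x)
    hεδ).exists
  exact ⟨gridNet g o h n S, isDepth4ReLUNet_gridNet,
    .of_bound isDepth4ReLUNet_gridNet.continuous.aestronglyMeasurable W
      (ae_of_all _ (abs_gridNet_le n.cast_nonneg hh hW)), hn⟩

theorem exists_isDepth4ReLUNet_integral_sq_sub_le {m : ℕ}
    {ν : Measure (EuclideanSpace ℝ (Fin m))} [IsFiniteMeasure ν]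
    {f : EuclideanSpace ℝ (Fin m) → ℝ} (hf : MemLp f 2 ν) {δ : ℝ} (hδ : 0 < δ) :
    ∃ F, IsDepth4ReLUNet F ∧ ∫ x, |f x - F x| ^ 2 ∂ν ≤ δ := by
  obtain ⟨g, hgc, hfg, hg, hgL2⟩ := MemLp.exists_hasCompactSupport_integral_rpow_sub_le two_pos
    (by rwa [ENNReal.ofReal_ofNat]) (by positivity : 0 < δ / 4)
  rw [ENNReal.ofReal_ofNat] at hgL2
  simp only [Real.norm_eq_abs, Real.rpow_two, sq_abs] at hfg
  obtain ⟨F, hF, hFL2, hgF⟩ :=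
    exists_isDepth4ReLUNet_integral_sq_sub_lt_of_hasCompactSupport (ν := ν) hg hgc
      (by positivity : 0 < δ / 4)
  refine ⟨F, hF, ?_⟩
  have hfg_int : Integrable (fun x => (f x - g x) ^ 2) ν := (hf.sub hgL2).integrable_sq
  have hgF_int : Integrable (fun x => (g x - F x) ^ 2) ν := (hgL2.sub hFL2).integrable_sq
  calc ∫ x, |f x - F x| ^ 2 ∂ν
      ≤ ∫ x, (2 * (f x - g x) ^ 2 + 2 * (g x - F x) ^ 2) ∂ν :=
        integral_mono_of_nonneg (ae_of_all _ fun x => sq_nonneg _)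
          ((hfg_int.const_mul 2).add (hgF_int.const_mul 2))
          (ae_of_all _ fun x => by
            dsimp only; rw [sq_abs]; nlinarith [sq_nonneg (f x - 2 * g x + F x)])
    _ = 2 * ∫ x, (f x - g x) ^ 2 ∂ν + 2 * ∫ x, (g x - F x) ^ 2 ∂ν := by
        rw [integral_add (hfg_int.const_mul 2) (hgF_int.const_mul 2), integral_const_mul,
          integral_const_mul]
    _ ≤ δ := by linarith

section Hausdorff

variable {d : ℕ} {M : Type*} [TopologicalSpace M] [ChartedSpace (EuclideanSpace ℝ (Fin d)) M]
  {F : Type*} [NormedAddCommGroup F] [NormedSpace ℝ F] [MeasurableSpace F] [BorelSpace F]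
  {e : M → F}

theorem ContMDiffAt.exists_mem_nhds_hausdorffMeasure_image_lt_top {p : M}
    (he : ContMDiffAt (𝓡 d) 𝓘(ℝ, F) 1 e p) : ∃ U ∈ 𝓝 p, μH[d] (e '' U) < ⊤ := by
  have : (μH[d] : Measure (EuclideanSpace ℝ (Fin d))).IsAddHaarMeasure := by
    simpa using isAddHaarMeasure_hausdorffMeasure (E := EuclideanSpace ℝ (Fin d))
  set φ := extChartAt (𝓡 d) p
  have hdiff : ContDiffAt ℝ 1 (e ∘ φ.symm) (φ p) := by
    have := ((contMDiffAt_iff.1 he).2)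
    simp only [extChartAt_model_space_eq_id, PartialEquiv.refl_coe, Function.id_comp,
      modelWithCornersSelf_coe, Set.range_id, contDiffWithinAt_univ] at this
    exact this
  obtain ⟨K, t, ht, hlip⟩ := hdiff.exists_lipschitzOnWith
  obtain ⟨r, hr, hrt⟩ := Metric.nhds_basis_closedBall.mem_iff.1 ht
  refine ⟨φ.source ∩ φ ⁻¹' Metric.closedBall (φ p) r,
    inter_mem (extChartAt_source_mem_nhds p)
      ((continuousAt_extChartAt p).preimage_mem_nhds (Metric.closedBall_mem_nhds _ hr)), ?_⟩
  have himage : e '' (φ.source ∩ φ ⁻¹' Metric.closedBall (φ p) r) ⊆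
      (e ∘ φ.symm) '' Metric.closedBall (φ p) r := by
    rintro _ ⟨q, ⟨hq, hqr⟩, rfl⟩
    exact ⟨φ q, hqr, by simp [φ.left_inv hq]⟩
  calc μH[d] (e '' (φ.source ∩ φ ⁻¹' Metric.closedBall (φ p) r))
      ≤ μH[d] ((e ∘ φ.symm) '' Metric.closedBall (φ p) r) := measure_mono himage
    _ ≤ K ^ (d : ℝ) * μH[d] (Metric.closedBall (φ p) r) :=
        (hlip.mono hrt).hausdorffMeasure_image_le d.cast_nonneg
    _ < ⊤ := ENNReal.mul_lt_top (by simp) (isCompact_closedBall _ _).measure_lt_top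

theorem ContMDiff.hausdorffMeasure_range_lt_top [CompactSpace M]
    (he : ContMDiff (𝓡 d) 𝓘(ℝ, F) 1 e) : μH[d] (Set.range e) < ⊤ := by
  choose U hU hUe using fun p => (he p).exists_mem_nhds_hausdorffMeasure_image_lt_top
  obtain ⟨t, ht⟩ := CompactSpace.elim_nhds_subcover U hU
  calc μH[d] (Set.range e) = μH[d] (⋃ p ∈ t, e '' U p) := by
        rw [← Set.image_iUnion₂, ht, Set.top_eq_univ, Set.image_univ]
    _ ≤ ∑ p ∈ t, μH[d] (e '' U p) := measure_biUnion_finset_le _ _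
    _ < ⊤ := ENNReal.sum_lt_top.2 fun p _ => hUe p

end Hausdorff

theorem statement0 (d m : ℕ)
    (M : Type) [TopologicalSpace M] [ChartedSpace (EuclideanSpace ℝ (Fin d)) M]
    [CompactSpace M]
    (e : M → EuclideanSpace ℝ (Fin m))
    (he : ContMDiff (𝓡 d) 𝓘(ℝ, EuclideanSpace ℝ (Fin m)) (⊤ : ℕ∞) e)
    (Γ : Set (EuclideanSpace ℝ (Fin m))) (hΓ : Γ = Set.range e)
    (μ : Measure (EuclideanSpace ℝ (Fin m))) (hμ : μ = μH[(d : ℝ)].restrict Γ)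
    (f : EuclideanSpace ℝ (Fin m) → ℝ) (hf : MemLp f 2 μ)
    (δ : ℝ) (hδ : 0 < δ) :
    ∃ fN : EuclideanSpace ℝ (Fin m) → ℝ, IsDepth4ReLUNet fN ∧
      ∫ x, |f x - fN x| ^ 2 ∂μ ≤ δ := by
  subst hΓ hμ
  have hfin : μH[(d : ℝ)] (Set.range e) < ⊤ :=
    (he.of_le (by exact_mod_cast le_top)).hausdorffMeasure_range_lt_top
  have : IsFiniteMeasure (μH[(d : ℝ)].restrict (Set.range e)) := isFiniteMeasure_restrict.2 hfin.ne
  exact exists_isDepth4ReLUNet_integral_sq_sub_le hf hδ
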